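/- arXiv:2409.05083 — 2 statements merged into one kernel-verified Lean document; each statement's English description precedes it below -/
import Mathlib

section
/- Let g : [0,∞) → [0,∞) be a strictly convex, continuous function with g(0) = g'(0) = 0, g''(0) ∈ (0,∞), and lim_{t→∞} g(t)/t = ∞. If a centered random variable ξ satisfies P(|ξ| > t) ≤ exp(-g(t)) for all t ≥ 0, then there exists a constant C₁ ∈ (0,∞) such that for all λ ∈ ℝ, E exp(λξ) ≤ exp(g*(C₁ λ)), where g*(λ) = sup_{t ≥ 0} (|λ| t − g(t)) is the Young–Fenchel (Legendre) transform of g. -/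
/-!
Since `g(0) = g'(0) = 0 < g''(0)`, near `0` we have `g t ≤ 2 g''(0) t²`, which gives
`g*(Cλ) ≥ K · min(λ², |λ|)` with `K` as large as we like once `C` is large;
superlinearity of `g` makes `g*` finite.
For `|λ| ≤ 1`, centering and `eˣ ≤ 1 + x + x² e^{|x|}` give
`E e^{λξ} ≤ 1 + λ² E[ξ² e^{|ξ|}]`, a moment that the tail bound makes finite.
For `|λ| > 1`, the layer-cake formula gives
`E e^{|λ||ξ|} ≤ 1 + ∫₀^∞ |λ| e^{|λ|t − g(t)} dt`, and `|λ|t − g(t) ≤ g*(Cλ) − (C − 1)|λ|t`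
bounds this by `1 + e^{g*(Cλ)}/(C − 1) ≤ e^{g*(Cλ)}`.
-/

open MeasureTheory ProbabilityTheory Real Set Filter

/-- Young–Fenchel (Legendre) transform `g*(λ) = sup_{t ≥ 0} (|λ| t − g t)`. -/
noncomputable def youngFenchel (g : ℝ → ℝ) (l : ℝ) : ℝ :=
  ⨆ t : {t : ℝ // 0 ≤ t}, (|l| * t.1 - g t.1)

open scoped Topology

lemma exp_le_one_add_add_sq_mul_exp_abs (x : ℝ) : exp x ≤ 1 + x + x ^ 2 * exp |x| := by
  have hexp : exp (-x) * exp x = 1 := by rw [← exp_add, neg_add_cancel, exp_zero]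
  have h₁ : exp x - 1 - x ≤ x * (exp x - 1) := by
    nlinarith [one_sub_le_exp_neg x, exp_pos x]
  have h₂ : x * (exp x - 1) ≤ x ^ 2 * exp |x| := by
    rcases le_total 0 x with hx | hx
    · rw [abs_of_nonneg hx]
      nlinarith [one_sub_le_exp_neg x, exp_pos x]
    · rw [abs_of_nonpos hx]
      nlinarith [add_one_le_exp x, one_le_exp (neg_nonneg.mpr hx)]
  linarith

lemma exists_le_mul_sq_of_deriv_deriv_lt {g : ℝ → ℝ} {c : ℝ}
    (hcont : ContinuousOn g (Ici 0)) (hg0 : g 0 = 0) (hg'0 : deriv g 0 = 0)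
    (hpos : 0 < deriv (deriv g) 0) (hc : deriv (deriv g) 0 < c) :
    ∃ δ > 0, ∀ t ∈ Icc 0 δ, g t ≤ c * t ^ 2 := by
  have hd : HasDerivAt (deriv g) (deriv (deriv g) 0) 0 :=
    (differentiableAt_of_deriv_ne_zero hpos.ne').hasDerivAt
  have hslope : ∀ᶠ x in 𝓝[>] 0, slope (deriv g) 0 x ∈ Ioo 0 c :=
    ((hasDerivAt_iff_tendsto_slope.mp hd).mono_left (nhdsGT_le_nhdsNE 0)).eventually
      (Ioo_mem_nhds hpos hc)
  obtain ⟨δ, hδ, hδslope⟩ := mem_nhdsGT_iff_exists_Ioc_subset.mp hslope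
  have hderiv : ∀ x ∈ Ioc 0 δ, 0 < deriv g x ∧ deriv g x < c * x := by
    intro x hx
    have hx0 : 0 < x := hx.1
    obtain ⟨h₁, h₂⟩ := hδslope hx
    rw [slope_def_field, hg'0, sub_zero, sub_zero] at h₁ h₂
    exact ⟨div_pos_iff_of_pos_right hx0 |>.mp h₁, (div_lt_iff₀ hx0).mp h₂⟩
  refine ⟨δ, hδ, fun t ⟨ht0, htδ⟩ => ?_⟩
  rcases ht0.eq_or_lt with rfl | ht0
  · simp [hg0]
  -- `deriv g x ≠ 0` forces differentiability at `x`, since `deriv` is `0` elsewhere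
  have hdiff : DifferentiableOn ℝ g (Ioo 0 t) := fun x hx =>
    (differentiableAt_of_deriv_ne_zero
      (hderiv x ⟨hx.1, hx.2.le.trans htδ⟩).1.ne').differentiableWithinAt
  obtain ⟨x, hx, hmvt⟩ := exists_deriv_eq_slope g ht0 (hcont.mono Icc_subset_Ici_self) hdiff
  have hgt : g t = deriv g x * t := by
    rw [hmvt, hg0, sub_zero, sub_zero, div_mul_cancel₀ _ ht0.ne']
  have hcx := (hderiv x ⟨hx.1, hx.2.le.trans htδ⟩).2
  have hc0 : 0 < c := hpos.trans hc
  calc g t = deriv g x * t := hgt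
    _ ≤ c * x * t := by gcongr
    _ ≤ c * t ^ 2 := by rw [sq, ← mul_assoc]; gcongr; exact hx.2.le

section YoungFenchel

variable {g : ℝ → ℝ}

lemma youngFenchel_abs (l : ℝ) : youngFenchel g |l| = youngFenchel g l := by
  simp only [youngFenchel, abs_abs]

variable (hnonneg : ∀ t : ℝ, 0 ≤ t → 0 ≤ g t) (hsuper : Tendsto (fun t => g t / t) atTop atTop)
include hnonneg hsuper

lemma bddAbove_youngFenchel (l : ℝ) :
    BddAbove (range fun t : {t : ℝ // 0 ≤ t} => |l| * t.1 - g t.1) := by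
  obtain ⟨T, hT⟩ := eventually_atTop.mp (hsuper.eventually_ge_atTop |l|)
  refine ⟨|l| * max T 1, ?_⟩
  rintro _ ⟨⟨t, ht⟩, rfl⟩
  rcases le_or_gt t (max T 1) with htT | htT
  · nlinarith [hnonneg t ht, abs_nonneg l]
  · have ht0 : 0 < t := lt_of_lt_of_le one_pos ((le_max_right T 1).trans htT.le)
    have hgt : |l| * t ≤ g t := (le_div_iff₀ ht0).mp (hT t ((le_max_left T 1).trans htT.le))
    nlinarith [abs_nonneg l, le_max_right T 1]

lemma le_youngFenchel (l : ℝ) {t : ℝ} (ht : 0 ≤ t) : |l| * t - g t ≤ youngFenchel g l :=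
  le_ciSup (bddAbove_youngFenchel hnonneg hsuper l) ⟨t, ht⟩

lemma min_le_youngFenchel {c δ : ℝ} (hc : 0 < c) (hδ : 0 ≤ δ)
    (hquad : ∀ t ∈ Icc 0 δ, g t ≤ c * t ^ 2) (l : ℝ) :
    min (l ^ 2 / (4 * c)) (|l| * δ / 2) ≤ youngFenchel g l := by
  rcases le_or_gt |l| (2 * c * δ) with hl | hl
  · -- the maximiser `|l| / (2c)` of `|l| s - c s²` lies in `[0, δ]`
    have hs : |l| / (2 * c) ∈ Icc 0 δ :=
      ⟨by positivity, (div_le_iff₀ (by positivity)).mpr (by linarith)⟩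
    have hval : |l| * (|l| / (2 * c)) - c * (|l| / (2 * c)) ^ 2 = l ^ 2 / (4 * c) := by
      field_simp
      rw [sq_abs]
      ring
    refine (min_le_left _ _).trans ?_
    linarith [le_youngFenchel hnonneg hsuper l hs.1, hquad _ hs]
  · refine (min_le_right _ _).trans ?_
    nlinarith [le_youngFenchel hnonneg hsuper l hδ, hquad δ ⟨hδ, le_rfl⟩]

lemma mul_min_sq_abs_le_youngFenchel {c δ K C : ℝ} (hc : 0 < c) (hδ : 0 ≤ δ)
    (hquad : ∀ t ∈ Icc 0 δ, g t ≤ c * t ^ 2) (hK : 0 ≤ K) (hKc : 4 * c * K ≤ C ^ 2)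
    (hKδ : 2 * K ≤ C * δ) (l : ℝ) : K * min (l ^ 2) |l| ≤ youngFenchel g (C * l) := by
  refine le_trans ?_ (min_le_youngFenchel hnonneg hsuper hc hδ hquad (C * l))
  rw [mul_min_of_nonneg _ _ hK]
  refine min_le_min ?_ ?_
  · rw [le_div_iff₀ (by positivity), mul_pow]
    nlinarith [sq_nonneg l]
  · have hKδ' : 2 * K ≤ |C| * δ := hKδ.trans (by gcongr; exact le_abs_self C)
    rw [abs_mul]
    nlinarith [mul_le_mul_of_nonneg_right hKδ' (abs_nonneg l)]

end YoungFenchel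

section Moments

variable {Ω : Type*} [MeasurableSpace Ω] {μ : Measure Ω} [IsProbabilityMeasure μ]
  {X : Ω → ℝ} {g : ℝ → ℝ}

lemma integrable_exp_mul_abs_and_integral_le_of_tail (hX : AEMeasurable X μ)
    (htail : ∀ t : ℝ, 0 ≤ t → μ {ω | t < |X ω|} ≤ ENNReal.ofReal (exp (-g t)))
    {c : ℝ} (hc : 0 ≤ c) {F : ℝ → ℝ} (hF : IntegrableOn F (Ioi 0))
    (hcF : ∀ t : ℝ, 0 < t → c * exp (c * t - g t) ≤ F t) :
    Integrable (fun ω => exp (c * |X ω|)) μ ∧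
      ∫ ω, exp (c * |X ω|) ∂μ ≤ 1 + ∫ t in Ioi 0, F t := by
  have hF0 : 0 ≤ ∫ t in Ioi 0, F t := setIntegral_nonneg measurableSet_Ioi fun t ht =>
    (by positivity : 0 ≤ c * exp _).trans (hcF t ht)
  have hprim : ∀ x : ℝ, ∫ t in (0 : ℝ)..x, c * exp (c * t) = exp (c * x) - 1 := by
    intro x
    rw [intervalIntegral.integral_eq_sub_of_hasDerivAt (f := fun t => exp (c * t))
      (fun t _ => by simpa [mul_comm] using ((hasDerivAt_id t).const_mul c).exp)
      ((by fun_prop : Continuous fun t => c * exp (c * t)).intervalIntegrable _ _)]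
    simp
  have hlayer : ∫⁻ ω, ENNReal.ofReal (exp (c * |X ω|) - 1) ∂μ
      = ∫⁻ t in Ioi 0, μ {ω | t < |X ω|} * ENNReal.ofReal (c * exp (c * t)) := by
    simp_rw [← hprim]
    exact lintegral_comp_eq_lintegral_meas_lt_mul μ (Eventually.of_forall fun ω => abs_nonneg _)
      hX.abs (fun t _ => (by fun_prop : Continuous fun t => c * exp (c * t)).intervalIntegrable _ _)
      (Eventually.of_forall fun t => by positivity)
  have hbound : ∫⁻ ω, ENNReal.ofReal (exp (c * |X ω|) - 1) ∂μ
      ≤ ENNReal.ofReal (∫ t in Ioi 0, F t) := by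
    rw [hlayer, ofReal_integral_eq_lintegral_ofReal hF
      ((ae_restrict_iff' measurableSet_Ioi).mpr (Eventually.of_forall fun t ht =>
        (by positivity : 0 ≤ c * exp _).trans (hcF t ht)))]
    refine setLIntegral_mono' measurableSet_Ioi fun t ht => ?_
    calc μ {ω | t < |X ω|} * ENNReal.ofReal (c * exp (c * t))
        ≤ ENNReal.ofReal (exp (-g t)) * ENNReal.ofReal (c * exp (c * t)) := by
          gcongr; exact htail t (le_of_lt ht)
      _ = ENNReal.ofReal (c * exp (c * t - g t)) := by
          rw [← ENNReal.ofReal_mul (exp_nonneg _), sub_eq_add_neg, exp_add]; ring_nf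
      _ ≤ ENNReal.ofReal (F t) := ENNReal.ofReal_le_ofReal (hcF t ht)
  have hmeas : AEStronglyMeasurable (fun ω => exp (c * |X ω|) - 1) μ := by
    fun_prop
  have hnn : 0 ≤ᵐ[μ] fun ω => exp (c * |X ω|) - 1 :=
    Eventually.of_forall fun ω => sub_nonneg.mpr (one_le_exp (by positivity))
  have hint : Integrable (fun ω => exp (c * |X ω|) - 1) μ :=
    ⟨hmeas, (hasFiniteIntegral_iff_ofReal hnn).mpr
      (hbound.trans_lt ENNReal.ofReal_lt_top)⟩
  have hle : ∫ ω, (exp (c * |X ω|) - 1) ∂μ ≤ ∫ t in Ioi 0, F t := by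
    rw [integral_eq_lintegral_of_nonneg_ae hnn hmeas]
    exact ENNReal.toReal_le_of_le_ofReal hF0 hbound
  have hint' : Integrable (fun ω => exp (c * |X ω|)) μ :=
    (hint.add (integrable_const 1)).congr (Eventually.of_forall fun ω => sub_add_cancel _ _)
  refine ⟨hint', ?_⟩
  rw [integral_sub hint' (integrable_const 1)] at hle
  simp only [integral_const, probReal_univ, smul_eq_mul, one_mul] at hle
  linarith

section Superlinear

variable (hnonneg : ∀ t : ℝ, 0 ≤ t → 0 ≤ g t) (hsuper : Tendsto (fun t => g t / t) atTop atTop)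
  (hX : AEMeasurable X μ)
  (htail : ∀ t : ℝ, 0 ≤ t → μ {ω | t < |X ω|} ≤ ENNReal.ofReal (exp (-g t)))
include hnonneg hsuper hX htail

lemma integral_exp_mul_abs_le_youngFenchel {c a : ℝ} (hc : 0 ≤ c) (hca : c < a) :
    Integrable (fun ω => exp (c * |X ω|)) μ ∧
      ∫ ω, exp (c * |X ω|) ∂μ ≤ 1 + c * exp (youngFenchel g a) / (a - c) := by
  set G := youngFenchel g a
  have hF : IntegrableOn (fun t => c * exp G * exp ((c - a) * t)) (Ioi 0) :=
    (integrableOn_exp_mul_Ioi (by linarith) 0).const_mul _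
  have hintF : ∫ t in Ioi 0, c * exp G * exp ((c - a) * t) = c * exp G / (a - c) := by
    rw [integral_const_mul, integral_exp_mul_Ioi (by linarith), mul_zero, exp_zero,
      neg_div, ← div_neg, neg_sub, mul_one_div]
  have hcF : ∀ t : ℝ, 0 < t → c * exp (c * t - g t) ≤ c * exp G * exp ((c - a) * t) := by
    intro t ht
    have hG := le_youngFenchel hnonneg hsuper a ht.le
    rw [abs_of_pos (hc.trans_lt hca)] at hG
    rw [mul_assoc, ← exp_add]
    gcongr
    linarith
  simpa only [hintF] using integrable_exp_mul_abs_and_integral_le_of_tail hX htail hc hF hcF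

lemma integrable_sq_mul_exp_abs : Integrable (fun ω => X ω ^ 2 * exp |X ω|) μ := by
  have h2 := (integral_exp_mul_abs_le_youngFenchel hnonneg hsuper hX htail
    (c := 2) (a := 3) (by norm_num) (by norm_num)).1
  refine (h2.const_mul 2).mono' ((hX.pow_const 2).mul hX.abs.exp).aestronglyMeasurable
    (Eventually.of_forall fun ω => ?_)
  have hsq : X ω ^ 2 / 2 ≤ exp |X ω| := by
    simpa [sq_abs] using pow_div_factorial_le_exp _ (abs_nonneg (X ω)) 2
  rw [norm_of_nonneg (by positivity)]
  calc X ω ^ 2 * exp |X ω| ≤ 2 * exp |X ω| * exp |X ω| := by gcongr; linarith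
    _ = 2 * exp (2 * |X ω|) := by rw [mul_assoc, ← exp_add, ← two_mul]

lemma integral_exp_mul_le_exp_youngFenchel {C l : ℝ} (hC : 3 ≤ C) (hl : l ≠ 0)
    (hG : 1 ≤ youngFenchel g (C * l)) :
    ∫ ω, exp (l * X ω) ∂μ ≤ exp (youngFenchel g (C * l)) := by
  set G := youngFenchel g (C * l)
  have hl0 : 0 < |l| := abs_pos.mpr hl
  have hCl : |C * l| = C * |l| := by rw [abs_mul, abs_of_pos (by linarith)]
  obtain ⟨hint, hle⟩ := integral_exp_mul_abs_le_youngFenchel hnonneg hsuper hX htail hl0.le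
    (show |l| < |C * l| by rw [hCl]; nlinarith)
  have hfrac : |l| * exp (youngFenchel g |C * l|) / (|C * l| - |l|) = exp G / (C - 1) := by
    rw [youngFenchel_abs, hCl]
    field_simp
    ring
  calc ∫ ω, exp (l * X ω) ∂μ ≤ ∫ ω, exp (|l| * |X ω|) ∂μ :=
        integral_mono_of_nonneg (Eventually.of_forall fun ω => (exp_pos _).le) hint
          (Eventually.of_forall fun ω =>
            exp_le_exp.mpr ((le_abs_self _).trans (abs_mul _ _).le))
    _ ≤ 1 + exp G / (C - 1) := hfrac ▸ hle
    _ ≤ 1 + exp G / 2 := by gcongr; linarith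
    _ ≤ exp G := by linarith [add_one_le_exp G]

end Superlinear

lemma integral_exp_mul_le_one_add_sq_mul (hint : Integrable X μ) (hcent : ∫ ω, X ω ∂μ = 0)
    (hM : Integrable (fun ω => X ω ^ 2 * exp |X ω|) μ) {l : ℝ} (hl : |l| ≤ 1) :
    ∫ ω, exp (l * X ω) ∂μ ≤ 1 + l ^ 2 * ∫ ω, X ω ^ 2 * exp |X ω| ∂μ := by
  have hpt : ∀ ω, exp (l * X ω) ≤ 1 + l * X ω + l ^ 2 * (X ω ^ 2 * exp |X ω|) := by
    intro ω
    have hexp : exp |l * X ω| ≤ exp |X ω| :=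
      exp_le_exp.mpr (by rw [abs_mul]; exact mul_le_of_le_one_left (abs_nonneg _) hl)
    calc exp (l * X ω) ≤ 1 + l * X ω + (l * X ω) ^ 2 * exp |l * X ω| :=
          exp_le_one_add_add_sq_mul_exp_abs _
      _ ≤ 1 + l * X ω + (l * X ω) ^ 2 * exp |X ω| := by gcongr
      _ = 1 + l * X ω + l ^ 2 * (X ω ^ 2 * exp |X ω|) := by ring
  have hlin : Integrable (fun ω => 1 + l * X ω) μ := (integrable_const 1).add (hint.const_mul l)
  calc ∫ ω, exp (l * X ω) ∂μ ≤ ∫ ω, (1 + l * X ω + l ^ 2 * (X ω ^ 2 * exp |X ω|)) ∂μ :=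
        integral_mono_of_nonneg (Eventually.of_forall fun ω => (exp_pos _).le)
          (hlin.add (hM.const_mul _)) (Eventually.of_forall hpt)
    _ = 1 + l ^ 2 * ∫ ω, X ω ^ 2 * exp |X ω| ∂μ := by
        rw [integral_add hlin (hM.const_mul _),
          integral_add (integrable_const 1) (hint.const_mul l), integral_const_mul,
          integral_const_mul, hcent]
        simp

end Moments

theorem mgf_bound_of_tail_general
    {Ω : Type*} [MeasurableSpace Ω] (μ : Measure Ω) [IsProbabilityMeasure μ]
    (g : ℝ → ℝ)
    (hcont : ContinuousOn g (Set.Ici (0 : ℝ)))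
    (hnonneg : ∀ t : ℝ, 0 ≤ t → 0 ≤ g t)
    (hg0 : g 0 = 0) (hg'0 : deriv g 0 = 0)
    (hg''0 : 0 < deriv (deriv g) 0)
    (hsuper : Tendsto (fun t => g t / t) atTop atTop)
    (ξ : Ω → ℝ)
    (hint : Integrable ξ μ) (hcent : (∫ ω, ξ ω ∂μ) = 0)
    (htail : ∀ t : ℝ, 0 ≤ t → μ {ω | t < |ξ ω|} ≤ ENNReal.ofReal (Real.exp (-g t))) :
    ∃ C₁ : ℝ, 0 < C₁ ∧
      ∀ l : ℝ, (∫ ω, Real.exp (l * ξ ω) ∂μ) ≤ Real.exp (youngFenchel g (C₁ * l)) := by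
  obtain ⟨δ, hδ, hquad⟩ :=
    exists_le_mul_sq_of_deriv_deriv_lt hcont hg0 hg'0 hg''0 (lt_two_mul_self hg''0)
  have hX := hint.aemeasurable
  have hM := integrable_sq_mul_exp_abs hnonneg hsuper hX htail
  set M := ∫ ω, ξ ω ^ 2 * exp |ξ ω| ∂μ
  have hM0 : 0 ≤ M := integral_nonneg fun ω => by positivity
  set c := 2 * deriv (deriv g) 0
  obtain ⟨C, hC3, hCc, hCδ⟩ :
      ∃ C : ℝ, 3 ≤ C ∧ 4 * c * (M + 1) ≤ C ^ 2 ∧ 2 * (M + 1) ≤ C * δ := by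
    have h₁ : 0 ≤ 4 * c * (M + 1) := by positivity
    have h₂ : 0 ≤ 2 * (M + 1) / δ := by positivity
    have h₃ : 2 * (M + 1) / δ * δ = 2 * (M + 1) := div_mul_cancel₀ _ hδ.ne'
    exact ⟨3 + 4 * c * (M + 1) + 2 * (M + 1) / δ, by linarith, by nlinarith, by nlinarith⟩
  have hG : ∀ l, (M + 1) * min (l ^ 2) |l| ≤ youngFenchel g (C * l) :=
    mul_min_sq_abs_le_youngFenchel hnonneg hsuper (by positivity) hδ.le hquad (by positivity)
      hCc hCδ
  refine ⟨C, by linarith, fun l => ?_⟩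
  rcases le_or_gt |l| 1 with hl | hl
  · have hmin : min (l ^ 2) |l| = l ^ 2 :=
      min_eq_left (by rw [← sq_abs]; nlinarith [abs_nonneg l])
    calc ∫ ω, exp (l * ξ ω) ∂μ ≤ 1 + l ^ 2 * M :=
          integral_exp_mul_le_one_add_sq_mul hint hcent hM hl
      _ ≤ exp (l ^ 2 * M) := by linarith [add_one_le_exp (l ^ 2 * M)]
      _ ≤ exp (youngFenchel g (C * l)) := exp_le_exp.mpr (by nlinarith [hG l, sq_nonneg l])
  · have hmin : min (l ^ 2) |l| = |l| := min_eq_right (by rw [← sq_abs]; nlinarith)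
    refine integral_exp_mul_le_exp_youngFenchel hnonneg hsuper hX htail hC3
      (abs_pos.mp (one_pos.trans hl)) ?_
    nlinarith [hG l]

/-- If a centered r.v. `ξ` has tail `P(|ξ| > t) ≤ exp(-g t)` for a strictly convex,
continuous `g ≥ 0` with `g 0 = g' 0 = 0`, `g'' 0 ∈ (0,∞)`, `g t / t → ∞`, then
`E exp(λ ξ) ≤ exp (g* (C₁ λ))` for some constant `C₁ ∈ (0,∞)` and all `λ ∈ ℝ`. -/
theorem mgf_bound_of_tail
    {Ω : Type*} [MeasurableSpace Ω] (μ : Measure Ω) [IsProbabilityMeasure μ]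
    (g : ℝ → ℝ)
    (hconv : StrictConvexOn ℝ (Set.Ici (0 : ℝ)) g)
    (hcont : ContinuousOn g (Set.Ici (0 : ℝ)))
    (hnonneg : ∀ t : ℝ, 0 ≤ t → 0 ≤ g t)
    (hg0 : g 0 = 0) (hg'0 : deriv g 0 = 0)
    (hg''0 : 0 < deriv (deriv g) 0)
    (hsuper : Tendsto (fun t => g t / t) atTop atTop)
    (ξ : Ω → ℝ) (hmeas : Measurable ξ)
    (hint : Integrable ξ μ) (hcent : (∫ ω, ξ ω ∂μ) = 0)
    (htail : ∀ t : ℝ, 0 ≤ t → μ {ω | t < |ξ ω|} ≤ ENNReal.ofReal (Real.exp (-g t))) :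
    ∃ C₁ : ℝ, 0 < C₁ ∧
      ∀ l : ℝ, (∫ ω, Real.exp (l * ξ ω) ∂μ) ≤ Real.exp (youngFenchel g (C₁ * l)) :=
  mgf_bound_of_tail_general μ g hcont hnonneg hg0 hg'0 hg''0 hsuper ξ hint hcent htail
end

section
/- MGF bound for U-statistics (Hoeffding decoupling bound): Let X(1),...,X(n) be i.i.d. random variables with values in a measurable space X, let h : X^m → ℝ be a symmetric measurable centered kernel, and let U_n be the associated U-statistic. With η = h(X(1),...,X(m)) and k = ⌊n/m⌋, for every λ ∈ ℝ, E exp(λ U_n) ≤ (E exp(λη/k))^k. -/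
open MeasureTheory ProbabilityTheory Real Set Filter

/-- The U-statistic with kernel `h` of `m` variables built from `X(1),…,X(n)`:
`U_n = C(n,m)⁻¹ ∑_{1 ≤ i(1) < … < i(m) ≤ n} h(X(i(1)),…,X(i(m)))`. -/
noncomputable def Ustat {Ω X : Type*} {n : ℕ} (m : ℕ) (h : (Fin m → X) → ℝ)
    (Xs : Fin n → Ω → X) (ω : Ω) : ℝ :=
  ((n.choose m : ℝ))⁻¹ *
    ∑ s ∈ (Finset.powersetCard m (Finset.univ : Finset (Fin n))).attach,
      h (fun j => Xs ((s.1.orderIsoOfFin ((Finset.mem_powersetCard.mp s.2).2) j : Fin n)) ω)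

/-!
Hoeffding's argument. Cut `{1, …, n}` into `k` disjoint blocks of `m` consecutive indices. By
symmetry of `h`, averaging the block mean `V = k⁻¹ ∑ⱼ h(X on block j)` over all relabellings
`σ` of the sample gives back `U_n`, so by convexity `exp (λ U_n) ≤ avg_σ exp (λ V ∘ σ)`. For each
`σ`, `exp (λ V ∘ σ)` is a product of `k` independent copies of `exp (λ η / k)`, whose expectation
is `(E exp (λ η / k))^k`.
-/

theorem MulAction.card_nsmul_sum_smul_eq {G α M : Type*} [Group G] [Fintype G] [MulAction G α]
    [IsPretransitive G α] [Fintype α] [AddCommMonoid M] (f : α → M) (a : α) :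
    Fintype.card α • ∑ g : G, f (g • a) = Fintype.card G • ∑ b, f b := by
  calc Fintype.card α • ∑ g : G, f (g • a) = ∑ b : α, ∑ g : G, f (g • b) := by
        rw [← Finset.card_univ, ← Finset.sum_const]
        refine Finset.sum_congr rfl fun b _ => ?_
        obtain ⟨g₀, rfl⟩ := exists_smul_eq G a b
        simp_rw [smul_smul]
        exact (Equiv.sum_comp (Equiv.mulRight g₀) fun g => f (g • a)).symm
    _ = ∑ g : G, ∑ b, f (g • b) := Finset.sum_comm
    _ = Fintype.card G • ∑ b, f b := by
        rw [← Finset.card_univ, ← Finset.sum_const]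
        exact Finset.sum_congr rfl fun g _ => Equiv.sum_comp (MulAction.toPerm g) f

theorem apply_comp_eq_of_range_eq {m : ℕ} {β X R : Type*} {h : (Fin m → X) → R}
    (hsymm : ∀ (σ : Equiv.Perm (Fin m)) (x : Fin m → X), h (x ∘ σ) = h x) (x : β → X)
    {f g : Fin m → β} (hf : Function.Injective f) (hg : Function.Injective g)
    (hfg : range f = range g) : h (x ∘ f) = h (x ∘ g) := by
  let τ : Equiv.Perm (Fin m) :=
    (Equiv.ofInjective f hf).trans ((Equiv.setCongr hfg).trans (Equiv.ofInjective g hg).symm)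
  have hgτ : g ∘ τ = f := funext fun i => by simp [τ, Equiv.apply_ofInjective_symm]
  rw [← hgτ, ← Function.comp_assoc, hsymm]

/-- Since the permutations of `Fin n` act transitively on the `m`-subsets, every subset is hit
equally often by `σ '' range e`. -/
theorem Ustat_eq_inv_factorial_mul_sum_perm {Ω X : Type*} {n m : ℕ} (h : (Fin m → X) → ℝ)
    (hsymm : ∀ (σ : Equiv.Perm (Fin m)) (x : Fin m → X), h (x ∘ σ) = h x)
    (Xs : Fin n → Ω → X) (ω : Ω) {e : Fin m → Fin n} (he : Function.Injective e) :
    Ustat m h Xs ω = (n.factorial : ℝ)⁻¹ * ∑ σ : Equiv.Perm (Fin n), h (fun i => Xs (σ (e i)) ω) := by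
  have := Set.powersetCard.isPretransitive (α := Fin n) (n := m)
  let s₀ := Set.powersetCard.ofFinEmb m (Fin n) ⟨e, he⟩
  let F : Set.powersetCard (Fin n) m → ℝ := fun s =>
    h (fun j => Xs (s.1.orderIsoOfFin (Set.powersetCard.card_eq s) j) ω)
  have hF : ∀ σ : Equiv.Perm (Fin n), F (σ • s₀) = h (fun i => Xs (σ (e i)) ω) := by
    intro σ
    refine apply_comp_eq_of_range_eq hsymm (fun t => Xs t ω) ?_ (σ.injective.comp he) ?_
    · exact Subtype.val_injective.comp (OrderIso.injective _)
    · simp only [Finset.coe_orderIsoOfFin_apply, Finset.range_orderEmbOfFin,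
        Set.powersetCard.coe_smul, Set.powersetCard.val_ofFinEmb, Finset.coe_smul_finset, s₀]
      ext t
      simp [Set.mem_smul_set]
  have hsum : ∑ s ∈ (Finset.powersetCard m (Finset.univ : Finset (Fin n))).attach,
      h (fun j => Xs ((s.1.orderIsoOfFin ((Finset.mem_powersetCard.mp s.2).2) j : Fin n)) ω) =
      ∑ s, F s := by
    rw [← Finset.univ_eq_attach]
    exact Fintype.sum_equiv (Equiv.subtypeEquivRight fun s => by simp [Set.powersetCard.mem_iff])
      _ _ fun s => rfl
  have hcard : Fintype.card (Set.powersetCard (Fin n) m) = n.choose m := by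
    rw [Fintype.card_eq_nat_card, Set.powersetCard.card, Nat.card_eq_fintype_card,
      Fintype.card_fin]
  have hchoose : (n.choose m : ℝ) ≠ 0 := by
    have := Fintype.card_le_of_injective e he
    simp only [Fintype.card_fin] at this
    exact_mod_cast (Nat.choose_pos this).ne'
  have key := MulAction.card_nsmul_sum_smul_eq (G := Equiv.Perm (Fin n)) F s₀
  simp only [hF, hcard, Fintype.card_perm, Fintype.card_fin, nsmul_eq_mul] at key
  rw [Ustat, hsum]
  field_simp
  linear_combination -key

namespace ProbabilityTheory

variable {Ω ι X : Type*} [MeasurableSpace Ω] [MeasurableSpace X] {μ : Measure Ω}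
  {f : ι → Ω → X}

theorem iIndepFun.identDistrib_comp {κ : Type*} [Fintype κ] (hf : ∀ i, Measurable (f i))
    (hindep : iIndepFun f μ) {e e' : κ → ι} (he : Function.Injective e)
    (he' : Function.Injective e') (hident : ∀ a, IdentDistrib (f (e a)) (f (e' a)) μ μ) :
    IdentDistrib (fun ω a => f (e a) ω) (fun ω a => f (e' a) ω) μ μ where
  aemeasurable_fst := (measurable_pi_lambda _ fun a => hf (e a)).aemeasurable
  aemeasurable_snd := (measurable_pi_lambda _ fun a => hf (e' a)).aemeasurable
  map_eq := by
    rw [(hindep.precomp he).map_fun_eq_pi_map fun a => (hf _).aemeasurable,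
      (hindep.precomp he').map_fun_eq_pi_map fun a => (hf _).aemeasurable]
    exact congrArg Measure.pi (funext fun a => (hident a).map_eq)

variable {κ β : Type*} [Fintype β] {E : κ × β → ι}

theorem iIndepFun.indepFun_prod_blocks {g : κ → (β → X) → ℝ} (hf : ∀ i, Measurable (f i))
    (hindep : iIndepFun f μ) (hE : Function.Injective E) (hg : ∀ j, Measurable (g j))
    {T : Finset κ} {j : κ} (hj : j ∉ T) :
    IndepFun (fun ω => ∏ j' ∈ T, g j' (fun b => f (E (j', b)) ω))
      (fun ω => g j (fun b => f (E (j, b)) ω)) μ := by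
  classical
  let S : Finset ι := (T ×ˢ Finset.univ).image E
  let S' : Finset ι := ({j} ×ˢ Finset.univ).image E
  have hS : ∀ j' ∈ T, ∀ b, E (j', b) ∈ S := fun j' hj' b =>
    Finset.mem_image_of_mem E (Finset.mem_product.2 ⟨hj', Finset.mem_univ b⟩)
  have hS' : ∀ b, E (j, b) ∈ S' := fun b =>
    Finset.mem_image_of_mem E
      (Finset.mem_product.2 ⟨Finset.mem_singleton_self j, Finset.mem_univ b⟩)
  have hdisj : Disjoint S S' := by
    simp only [S, S', Finset.disjoint_left, Finset.mem_image, Finset.mem_product]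
    rintro _ ⟨⟨j₁, b₁⟩, ⟨hj₁, -⟩, rfl⟩ ⟨⟨j₂, b₂⟩, ⟨hj₂, -⟩, heq⟩
    cases hE heq
    exact hj (Finset.mem_singleton.1 hj₂ ▸ hj₁)
  have hrestrict := (hindep.indepFun_finset S S' hdisj hf).comp
    (φ := fun y => ∏ j' ∈ T.attach, g j' (fun b => y ⟨E (j', b), hS j' j'.2 b⟩))
    (ψ := fun y => g j (fun b => y ⟨E (j, b), hS' b⟩))
    (Finset.measurable_prod _ fun j' _ =>
      (hg j').comp (measurable_pi_lambda _ fun b => measurable_pi_apply _))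
    ((hg j).comp (measurable_pi_lambda _ fun b => measurable_pi_apply _))
  convert hrestrict using 1
  · ext ω
    exact (Finset.prod_attach T fun j' => g j' (fun b => f (E (j', b)) ω)).symm
  · rfl

theorem iIndepFun.integrable_prod_blocks {g : κ → (β → X) → ℝ} (hf : ∀ i, Measurable (f i))
    (hindep : iIndepFun f μ) (hE : Function.Injective E) (hg : ∀ j, Measurable (g j))
    (hint : ∀ j, Integrable (fun ω => g j (fun b => f (E (j, b)) ω)) μ) (T : Finset κ) :
    Integrable (fun ω => ∏ j ∈ T, g j (fun b => f (E (j, b)) ω)) μ := by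
  classical
  have := hindep.isProbabilityMeasure
  induction T using Finset.induction with
  | empty => simp
  | insert j T hj ih =>
    simp_rw [Finset.prod_insert hj]
    exact (hindep.indepFun_prod_blocks hf hE hg hj).symm.integrable_mul (hint j) ih

theorem iIndepFun.integral_prod_blocks {g : κ → (β → X) → ℝ} (hf : ∀ i, Measurable (f i))
    (hindep : iIndepFun f μ) (hE : Function.Injective E) (hg : ∀ j, Measurable (g j))
    (T : Finset κ) :
    ∫ ω, ∏ j ∈ T, g j (fun b => f (E (j, b)) ω) ∂μ
      = ∏ j ∈ T, ∫ ω, g j (fun b => f (E (j, b)) ω) ∂μ := by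
  classical
  have := hindep.isProbabilityMeasure
  have hmeas : ∀ j, Measurable (fun ω => g j (fun b => f (E (j, b)) ω)) := fun j =>
    (hg j).comp (measurable_pi_lambda _ fun b => hf _)
  induction T using Finset.induction with
  | empty => simp
  | insert j T hj ih =>
    simp_rw [Finset.prod_insert hj]
    rw [(hindep.indepFun_prod_blocks hf hE hg hj).symm.integral_fun_mul_eq_mul_integral
      (hmeas j).aestronglyMeasurable
      (Finset.measurable_prod _ fun j' _ => hmeas j').aestronglyMeasurable, ih]

theorem iIndepFun.integral_prod_blocks_eq_pow [Fintype κ] {g : (β → X) → ℝ}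
    (hf : ∀ i, Measurable (f i)) (hindep : iIndepFun f μ)
    (hident : ∀ i j, IdentDistrib (f i) (f j) μ μ) (hE : Function.Injective E)
    {e : β → ι} (he : Function.Injective e) (hg : Measurable g) :
    ∫ ω, ∏ j, g (fun b => f (E (j, b)) ω) ∂μ
      = (∫ ω, g (fun b => f (e b) ω) ∂μ) ^ Fintype.card κ := by
  rw [hindep.integral_prod_blocks hf hE (fun _ => hg) Finset.univ, ← Finset.card_univ,
    ← Finset.prod_const]
  exact Finset.prod_congr rfl fun j _ => ((hindep.identDistrib_comp hf
    (hE.comp (Prod.mk_right_injective j)) he fun _ => hident _ _).comp hg).integral_eq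

end ProbabilityTheory

theorem exp_mul_Ustat_le_sum_perm_prod {Ω X κ : Type*} [Fintype κ] [Nonempty κ] {n m : ℕ}
    (h : (Fin m → X) → ℝ) (hsymm : ∀ (σ : Equiv.Perm (Fin m)) (x : Fin m → X), h (x ∘ σ) = h x)
    (Xs : Fin n → Ω → X) {E : κ × Fin m → Fin n} (hE : Function.Injective E) (l : ℝ) (ω : Ω) :
    exp (l * Ustat m h Xs ω) ≤ ∑ σ : Equiv.Perm (Fin n), (n.factorial : ℝ)⁻¹ *
      ∏ j, exp (l * h (fun i => Xs (σ (E (j, i))) ω) / Fintype.card κ) := by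
  have hU : l * Ustat m h Xs ω = ∑ σ : Equiv.Perm (Fin n), (n.factorial : ℝ)⁻¹ *
      ∑ j, l * h (fun i => Xs (σ (E (j, i))) ω) / Fintype.card κ := by
    have hblock : ∀ j, Ustat m h Xs ω = (n.factorial : ℝ)⁻¹ *
        ∑ σ : Equiv.Perm (Fin n), h (fun i => Xs (σ (E (j, i))) ω) := fun j =>
      Ustat_eq_inv_factorial_mul_sum_perm h hsymm Xs ω (hE.comp (Prod.mk_right_injective j))
    have hκ : (Fintype.card κ : ℝ) ≠ 0 := Nat.cast_ne_zero.2 Fintype.card_ne_zero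
    simp_rw [Finset.mul_sum]
    rw [Finset.sum_comm]
    calc l * Ustat m h Xs ω = ∑ _j : κ, l / Fintype.card κ * Ustat m h Xs ω := by
          rw [Finset.sum_const, Finset.card_univ, nsmul_eq_mul]
          field_simp
      _ = _ := Finset.sum_congr rfl fun j _ => by
          rw [hblock j, Finset.mul_sum, Finset.mul_sum]
          exact Finset.sum_congr rfl fun σ _ => by ring
  have hweights : ∑ _σ : Equiv.Perm (Fin n), (n.factorial : ℝ)⁻¹ = 1 := by
    simp [Finset.card_univ, Fintype.card_perm, Nat.factorial_ne_zero]
  rw [hU]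
  simp_rw [← Real.exp_sum]
  exact convexOn_exp.map_sum_le (fun _ _ => by positivity) hweights fun _ _ => Set.mem_univ _

/-- `blockIndex n m (j, i) = m * j + i`: the `n / m` disjoint blocks of `m` consecutive indices. -/
def blockIndex (n m : ℕ) : Fin (n / m) × Fin m → Fin n :=
  Fin.castLE (Nat.div_mul_le_self n m) ∘ finProdFinEquiv

theorem blockIndex_injective (n m : ℕ) : Function.Injective (blockIndex n m) :=
  (Fin.castLE_injective _).comp finProdFinEquiv.injective

theorem mgf_Ustat_le_general
    {Ω X : Type*} [MeasurableSpace Ω] [MeasurableSpace X]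
    (μ : Measure Ω) [IsProbabilityMeasure μ]
    (n m : ℕ) (hm : 0 < m) (hmn : m ≤ n)
    (Xs : Fin n → Ω → X) (hmeas : ∀ i, Measurable (Xs i))
    (hindep : iIndepFun Xs μ)
    (hident : ∀ i j, IdentDistrib (Xs i) (Xs j) μ μ)
    (h : (Fin m → X) → ℝ) (hhmeas : Measurable h)
    (hsymm : ∀ (σ : Equiv.Perm (Fin m)) (x : Fin m → X), h (x ∘ σ) = h x)
    (l : ℝ)
    (hexpint : Integrable
      (fun ω => Real.exp (l * h (fun i => Xs (Fin.castLE hmn i) ω) / (n / m : ℕ))) μ) :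
    (∫ ω, Real.exp (l * Ustat m h Xs ω) ∂μ)
      ≤ (∫ ω, Real.exp (l * h (fun i => Xs (Fin.castLE hmn i) ω) / (n / m : ℕ)) ∂μ)
          ^ (n / m : ℕ) := by
  set k := n / m
  have : Nonempty (Fin k) := ⟨⟨0, Nat.div_pos hmn hm⟩⟩
  have hg : Measurable fun y => exp (l * h y / k) := ((hhmeas.const_mul l).div_const _).exp
  have hE : ∀ σ : Equiv.Perm (Fin n), Function.Injective fun p => σ (blockIndex n m p) :=
    fun σ => σ.injective.comp (blockIndex_injective n m)
  have hint : ∀ σ : Equiv.Perm (Fin n), Integrable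
      (fun ω => ∏ j, exp (l * h (fun i => Xs (σ (blockIndex n m (j, i))) ω) / k)) μ :=
    fun σ => hindep.integrable_prod_blocks hmeas (hE σ) (fun _ => hg) (fun j =>
      ((hindep.identDistrib_comp hmeas ((hE σ).comp (Prod.mk_right_injective j))
        (Fin.castLE_injective hmn) fun _ => hident _ _).comp hg).integrable_iff.2 hexpint) _
  calc ∫ ω, exp (l * Ustat m h Xs ω) ∂μ
      ≤ ∫ ω, ∑ σ : Equiv.Perm (Fin n), (n.factorial : ℝ)⁻¹ *
          ∏ j, exp (l * h (fun i => Xs (σ (blockIndex n m (j, i))) ω) / k) ∂μ := by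
        refine integral_mono_of_nonneg (ae_of_all _ fun ω => (exp_pos _).le)
          (integrable_finsetSum _ fun σ _ => (hint σ).const_mul _) (ae_of_all _ fun ω => ?_)
        simpa using exp_mul_Ustat_le_sum_perm_prod h hsymm Xs (blockIndex_injective n m) l ω
    _ = (∫ ω, exp (l * h (fun i => Xs (Fin.castLE hmn i) ω) / k) ∂μ) ^ k := by
        rw [integral_finsetSum _ fun σ _ => (hint σ).const_mul _]
        simp_rw [integral_const_mul, hindep.integral_prod_blocks_eq_pow hmeas hident (hE _)
          (Fin.castLE_injective hmn) hg, Fintype.card_fin]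
        simp [k, Finset.card_univ, Fintype.card_perm, Nat.factorial_ne_zero]

/-- Hoeffding decoupling bound for the moment generating function of a U-statistic:
for i.i.d. `X(i)`, a symmetric centered kernel `h`, `η = h(X(1),…,X(m))` and
`k = ⌊n/m⌋`, one has `E exp(λ U_n) ≤ (E exp(λ η / k))^k` for every `λ`. -/
theorem mgf_Ustat_le
    {Ω X : Type*} [MeasurableSpace Ω] [MeasurableSpace X]
    (μ : Measure Ω) [IsProbabilityMeasure μ]
    (n m : ℕ) (hm : 0 < m) (hmn : m ≤ n)
    (Xs : Fin n → Ω → X) (hmeas : ∀ i, Measurable (Xs i))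
    (hindep : iIndepFun Xs μ)
    (hident : ∀ i j, IdentDistrib (Xs i) (Xs j) μ μ)
    (h : (Fin m → X) → ℝ) (hhmeas : Measurable h)
    (hsymm : ∀ (σ : Equiv.Perm (Fin m)) (x : Fin m → X), h (x ∘ σ) = h x)
    (hcent : (∫ ω, h (fun i => Xs (Fin.castLE hmn i) ω) ∂μ) = 0)
    (l : ℝ)
    (hexpint : Integrable
      (fun ω => Real.exp (l * h (fun i => Xs (Fin.castLE hmn i) ω) / (n / m : ℕ))) μ) :
    (∫ ω, Real.exp (l * Ustat m h Xs ω) ∂μ)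
      ≤ (∫ ω, Real.exp (l * h (fun i => Xs (Fin.castLE hmn i) ω) / (n / m : ℕ)) ∂μ)
          ^ (n / m : ℕ) :=
  mgf_Ustat_le_general μ n m hm hmn Xs hmeas hindep hident h hhmeas hsymm l hexpint
end
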